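/- Let E be a countable set, let Q and Q̃ be irreducible, uniformly bounded intensity matrices on E, and let π and ν be invariant probability vectors for Q and Q̃ respectively. Define Λ₁(Q) = (1/2) inf_{i ≠ j} [ |Q(i,i) − Q(j,i)| + |Q(i,j) − Q(j,j)| − ∑_{s ≠ i, s ≠ j} |Q(i,s) − Q(j,s)| ]. If Λ₁(Q) > 0, then ‖ν − π‖ ≤ ‖Q̃ − Q‖ / Λ₁(Q). -/

import Mathlib

open scoped Classical ENNReal NNReal
open Filter MeasureTheory

noncomputable section

variable {E : Type*}

def matPow (P : E → E → ℝ) : ℕ → E → E → ℝ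
  | 0 => fun i j => if i = j then (1 : ℝ) else 0
  | n + 1 => fun i j => ∑' k, matPow P n i k * P k j

def IsStochastic (P : E → E → ℝ) : Prop :=
  (∀ i j, 0 ≤ P i j) ∧ ∀ i, ∑' j, P i j = 1

def IsIrred (P : E → E → ℝ) : Prop :=
  ∀ i j, ∃ n, 1 ≤ n ∧ 0 < matPow P n i j

def IsProbVec (π : E → ℝ) : Prop :=
  (∀ i, 0 ≤ π i) ∧ ∑' i, π i = 1

def InvariantFor (π : E → ℝ) (P : E → E → ℝ) : Prop :=
  ∀ j, HasSum (fun i => π i * P i j) (π j)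

def vecNorm (μ : E → ℝ) : ℝ := ∑' i, |μ i|

def rowSumNorm (L : E → E → ℝ) : ℝ := ⨆ i, ∑' j, |L i j|

def ergCoeff (B : E → E → ℝ) : ℝ :=
  (1 / 2) * ⨆ p : E × E, ∑' k, |B p.1 k - B p.2 k|

def IsIntensity (Q : E → E → ℝ) : Prop :=
  (∀ i j, i ≠ j → 0 ≤ Q i j) ∧ ∀ i, HasSum (Q i) 0

def UnifBdd (Q : E → E → ℝ) : Prop := ∃ M : ℝ, ∀ i, -Q i i ≤ M

def QIrred (Q : E → E → ℝ) : Prop :=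
  ∀ i j, i ≠ j → ∃ (r : ℕ) (k : ℕ → E), 1 ≤ r ∧ k 0 = i ∧ k r = j ∧
    ∀ s < r, 0 < Q (k s) (k (s + 1))

def QInvariant (π : E → ℝ) (Q : E → E → ℝ) : Prop :=
  ∀ j, HasSum (fun i => π i * Q i j) 0

def transP (Q : E → E → ℝ) (t : ℝ) : E → E → ℝ :=
  fun i j => ∑' n : ℕ, t ^ n / (Nat.factorial n : ℝ) * matPow Q n i j

def qErgCoeff (Q : E → E → ℝ) : ℝ :=
  (1 / 2) * ⨅ p : {p : E × E // p.1 ≠ p.2},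
    (|Q p.val.1 p.val.1 - Q p.val.2 p.val.1| + |Q p.val.1 p.val.2 - Q p.val.2 p.val.2|
      - ∑' s : E, if s ≠ p.val.1 ∧ s ≠ p.val.2 then |Q p.val.1 s - Q p.val.2 s| else 0)

def vVecNorm (V : E → ℝ) (μ : E → ℝ) : ℝ≥0∞ := ∑' i, ENNReal.ofReal (|μ i| * V i)

def vMatNorm (V : E → ℝ) (L : E → E → ℝ) : ℝ≥0∞ :=
  ⨆ i, (∑' j, ENNReal.ofReal (|L i j| * V j)) / ENNReal.ofReal (V i)

def vOneNorm (V : E → ℝ) : ℝ≥0∞ := ⨆ i, 1 / ENNReal.ofReal (V i)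

/-! Write `μ = ν - π`. Invariance gives `μ Q = ν (Q - Q̃)`, so `‖μ Q‖ ≤ ‖Q̃ - Q‖`, and it remains to
show `Λ₁(Q) ‖μ‖ ≤ ‖μ Q‖` for every summable `μ` of total mass zero. Couple the positive and the
negative part of `μ` (both of mass `m = ‖μ‖ / 2`) by the product weights `c(i, j) = μ⁺ i μ⁻ j`, so
that `m μ = ∑ c(i, j) (δ_i - δ_j)`. For a fixed column `s`, the pairs with `s ∈ {i, j}` and
`c(i, j) ≠ 0` all contribute `Q i s - Q j s` with the same sign (the supports of `μ⁺`, `μ⁻` are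
disjoint and `Q` is nonnegative off the diagonal), so `m |(μ Q) s|` dominates
`∑ c(i, j) k_{ij}(s)`, where `k_{ij}` is `|Q i · - Q j ·|` with the entries off `{i, j}` negated;
the sum of `k_{ij}` is exactly the term minimised in `2 Λ₁(Q)`. Summing over `s` and exchanging
the sums gives `m ‖μ Q‖ ≥ ∑ c(i, j) · 2 Λ₁(Q) = 2 m² Λ₁(Q)`. -/

section RowBounded

lemma abs_tsum_le_tsum_abs {ι : Type*} {f : ι → ℝ} (hf : Summable fun i => |f i|) :
    |∑' i, f i| ≤ ∑' i, |f i| := by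
  simpa only [Real.norm_eq_abs] using
    norm_tsum_le_tsum_norm (f := f) (by simpa only [Real.norm_eq_abs] using hf)

variable {α β : Type*} {a : α → ℝ} {K : α → β → ℝ} {C : ℝ}

lemma summable_abs_mul_of_tsum_abs_le (ha : Summable fun i => |a i|)
    (hK : ∀ i, Summable fun s => |K i s|) (hC : ∀ i, ∑' s, |K i s| ≤ C) :
    Summable fun p : α × β => |a p.1 * K p.1 p.2| := by
  refine (summable_prod_of_nonneg fun _ => abs_nonneg _).2 ⟨fun i => ?_, ?_⟩
  · simp only [abs_mul]
    exact (hK i).mul_left |a i|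
  · refine (ha.mul_right C).of_nonneg_of_le (fun i => tsum_nonneg fun _ => abs_nonneg _)
      fun i => ?_
    simp only [abs_mul]
    rw [tsum_mul_left]
    exact mul_le_mul_of_nonneg_left (hC i) (abs_nonneg _)

lemma summable_mul_apply (ha : Summable fun i => |a i|)
    (hK : ∀ i, Summable fun s => |K i s|) (hC : ∀ i, ∑' s, |K i s| ≤ C) (s : β) :
    Summable fun i => a i * K i s :=
  ((summable_abs_mul_of_tsum_abs_le ha hK hC).prod_symm.prod_factor s).of_abs

lemma summable_abs_tsum_mul (ha : Summable fun i => |a i|)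
    (hK : ∀ i, Summable fun s => |K i s|) (hC : ∀ i, ∑' s, |K i s| ≤ C) :
    Summable fun s => |∑' i, a i * K i s| := by
  have hF := (summable_abs_mul_of_tsum_abs_le ha hK hC).prod_symm
  refine hF.prod.of_nonneg_of_le (fun _ => abs_nonneg _) fun s => ?_
  exact abs_tsum_le_tsum_abs (hF.prod_factor s)

lemma tsum_abs_tsum_mul_le (ha : Summable fun i => |a i|)
    (hK : ∀ i, Summable fun s => |K i s|) (hC : ∀ i, ∑' s, |K i s| ≤ C) :
    ∑' s, |∑' i, a i * K i s| ≤ C * ∑' i, |a i| := by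
  have hF := summable_abs_mul_of_tsum_abs_le ha hK hC
  calc ∑' s, |∑' i, a i * K i s| ≤ ∑' s, ∑' i, |a i * K i s| :=
        (summable_abs_tsum_mul ha hK hC).tsum_le_tsum
          (fun s => abs_tsum_le_tsum_abs (hF.prod_symm.prod_factor s)) hF.prod_symm.prod
    _ = ∑' i, |a i| * ∑' s, |K i s| := by
        rw [hF.tsum_comm]
        simp only [abs_mul, tsum_mul_left]
    _ ≤ ∑' i, |a i| * C := by
        refine Summable.tsum_le_tsum (fun i => mul_le_mul_of_nonneg_left (hC i) (abs_nonneg _))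
          ?_ (ha.mul_right C)
        exact hF.prod.congr fun i => by simp only [abs_mul, tsum_mul_left]
    _ = C * ∑' i, |a i| := by rw [tsum_mul_right, mul_comm]

lemma tsum_abs_sub_le {f g : β → ℝ} (hf : Summable fun s => |f s|)
    (hg : Summable fun s => |g s|) :
    ∑' s, |f s - g s| ≤ ∑' s, |f s| + ∑' s, |g s| := by
  rw [← hf.tsum_add hg]
  exact (hf.of_abs.sub hg.of_abs).abs.tsum_le_tsum (fun s => abs_sub _ _) (hf.add hg)

end RowBounded

namespace IsIntensity

variable {Q Q' : E → E → ℝ}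

lemma hasSum_update_diag_zero (hQ : IsIntensity Q) (i : E) :
    HasSum (Function.update (Q i) i 0) (-Q i i) := by
  simpa using (hQ.2 i).update i 0

lemma update_diag_zero_nonneg (hQ : IsIntensity Q) (i j : E) :
    0 ≤ Function.update (Q i) i 0 j := by
  rcases eq_or_ne j i with rfl | hj
  · simp
  · simpa [hj] using hQ.1 i j hj.symm

lemma diag_nonpos (hQ : IsIntensity Q) (i : E) : Q i i ≤ 0 :=
  neg_nonneg.1 <| (hQ.hasSum_update_diag_zero i).nonneg (hQ.update_diag_zero_nonneg i)

lemma abs_le_neg_diag (hQ : IsIntensity Q) (i j : E) : |Q i j| ≤ -Q i i := by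
  rcases eq_or_ne j i with rfl | hj
  · exact (abs_of_nonpos (hQ.diag_nonpos j)).le
  · rw [abs_of_nonneg (hQ.1 i j hj.symm)]
    simpa [hj] using le_hasSum (hQ.hasSum_update_diag_zero i) j
      fun k _ => hQ.update_diag_zero_nonneg i k

lemma hasSum_abs_row (hQ : IsIntensity Q) (i : E) :
    HasSum (fun j => |Q i j|) (-2 * Q i i) := by
  have h : (fun j => |Q i j|) = Function.update (Q i) i (-Q i i) := by
    funext j
    rcases eq_or_ne j i with rfl | hj
    · simp [abs_of_nonpos (hQ.diag_nonpos j)]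
    · simp [hj, abs_of_nonneg (hQ.1 i j hj.symm)]
  have hs := (hQ.2 i).update i (-Q i i)
  rwa [h, ← show -Q i i - Q i i + 0 = -2 * Q i i by ring]

lemma summable_abs_row (hQ : IsIntensity Q) (i : E) : Summable fun j => |Q i j| :=
  (hQ.hasSum_abs_row i).summable

lemma tsum_abs_row_le (hQ : IsIntensity Q) {M : ℝ} (hM : ∀ i, -Q i i ≤ M) (i : E) :
    ∑' j, |Q i j| ≤ 2 * M := by
  rw [(hQ.hasSum_abs_row i).tsum_eq]
  linarith [hM i]

lemma abs_le (hQ : IsIntensity Q) {M : ℝ} (hM : ∀ i, -Q i i ≤ M) (i j : E) :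
    |Q i j| ≤ M :=
  (hQ.abs_le_neg_diag i j).trans (hM i)

lemma summable_abs_sub (hQ : IsIntensity Q) (hQ' : IsIntensity Q') (i j : E) :
    Summable fun s => |Q i s - Q' j s| :=
  ((hQ.summable_abs_row i).of_abs.sub (hQ'.summable_abs_row j).of_abs).abs

lemma tsum_abs_sub_le (hQ : IsIntensity Q) (hQ' : IsIntensity Q') {M M' : ℝ}
    (hM : ∀ i, -Q i i ≤ M) (hM' : ∀ i, -Q' i i ≤ M') (i j : E) :
    ∑' s, |Q i s - Q' j s| ≤ 2 * M + 2 * M' :=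
  (_root_.tsum_abs_sub_le (hQ.summable_abs_row i) (hQ'.summable_abs_row j)).trans
    (add_le_add (hQ.tsum_abs_row_le hM i) (hQ'.tsum_abs_row_le hM' j))

end IsIntensity

lemma IsProbVec.hasSum {π : E → ℝ} (hπ : IsProbVec π) : HasSum π 1 := by
  have hs : Summable π := by
    by_contra h
    exact zero_ne_one (tsum_eq_zero_of_not_summable h ▸ hπ.2)
  exact hπ.2 ▸ hs.hasSum

lemma tsum_mul_sub_eq_neg_of_invariant {Q Qt : E → E → ℝ} {π ν : E → ℝ}
    (hπ : QInvariant π Q) (hν : QInvariant ν Qt) {s : E}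
    (hs : Summable fun i => ν i * Q i s) :
    ∑' i, (ν i - π i) * Q i s = -∑' i, ν i * (Qt i s - Q i s) := by
  have h1 : HasSum (fun i => (ν i - π i) * Q i s) (∑' i, ν i * Q i s - 0) := by
    simpa only [sub_mul] using hs.hasSum.sub (hπ s)
  have h2 : HasSum (fun i => ν i * (Qt i s - Q i s)) (0 - ∑' i, ν i * Q i s) := by
    simpa only [mul_sub] using (hν s).sub hs.hasSum
  rw [h1.tsum_eq, h2.tsum_eq]
  ring

lemma tsum_abs_le_rowSumNorm {L : E → E → ℝ} {C : ℝ} (hC : ∀ i, ∑' j, |L i j| ≤ C) (i : E) :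
    ∑' j, |L i j| ≤ rowSumNorm L :=
  le_ciSup ⟨C, by rintro _ ⟨k, rfl⟩; exact hC k⟩ i

section Coupling

variable {α : Type*} {μ : α → ℝ}

lemma posPart_mul_negPart_eq_zero (x : ℝ) : x⁺ * x⁻ = 0 := by
  rcases le_total 0 x with hx | hx
  · rw [negPart_eq_zero.2 hx, mul_zero]
  · rw [posPart_eq_zero.2 hx, zero_mul]

lemma hasSum_posPart (hμ : Summable fun i => |μ i|) (hμ0 : HasSum μ 0) :
    HasSum (fun i => (μ i)⁺) (vecNorm μ / 2) := by
  have h := (hμ.hasSum.add hμ0).div_const 2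
  rw [add_zero] at h
  rwa [show (fun i => (μ i)⁺) = fun i => (|μ i| + μ i) / 2 by
    funext i; linarith [posPart_add_negPart (μ i), posPart_sub_negPart (μ i)]]

lemma hasSum_negPart (hμ : Summable fun i => |μ i|) (hμ0 : HasSum μ 0) :
    HasSum (fun i => (μ i)⁻) (vecNorm μ / 2) := by
  have h := (hμ.hasSum.sub hμ0).div_const 2
  rw [sub_zero] at h
  rwa [show (fun i => (μ i)⁻) = fun i => (|μ i| - μ i) / 2 by
    funext i; linarith [posPart_add_negPart (μ i), posPart_sub_negPart (μ i)]]

lemma abs_posPart_le_abs (x : ℝ) : |x⁺| ≤ |x| := by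
  rw [abs_of_nonneg (posPart_nonneg x), ← posPart_add_negPart]
  exact le_add_of_nonneg_right (negPart_nonneg x)

lemma abs_negPart_le_abs (x : ℝ) : |x⁻| ≤ |x| := by
  rw [abs_of_nonneg (negPart_nonneg x), ← posPart_add_negPart]
  exact le_add_of_nonneg_left (posPart_nonneg x)

lemma summable_norm_of_abs_le {f : α → ℝ} (hμ : Summable fun i => |μ i|)
    (hf : ∀ i, |f i| ≤ |μ i|) : Summable fun i => ‖f i‖ :=
  hμ.of_nonneg_of_le (fun _ => norm_nonneg _) fun i => by
    rw [Real.norm_eq_abs]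
    exact hf i

lemma summable_norm_mul_of_abs_le {f x : α → ℝ} {B : ℝ} (hμ : Summable fun i => |μ i|)
    (hf : ∀ i, |f i| ≤ |μ i|) (hx : ∀ i, |x i| ≤ B) : Summable fun i => ‖f i * x i‖ :=
  (hμ.mul_right B).of_nonneg_of_le (fun _ => norm_nonneg _) fun i => by
    rw [Real.norm_eq_abs, abs_mul]
    exact mul_le_mul (hf i) (hx i) (abs_nonneg _) (abs_nonneg _)

lemma hasSum_posPart_mul_negPart (hμ : Summable fun i => |μ i|) (hμ0 : HasSum μ 0) :
    HasSum (fun p : α × α => (μ p.1)⁺ * (μ p.2)⁻) (vecNorm μ / 2 * (vecNorm μ / 2)) := by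
  have hP : Summable fun i => ‖(μ i)⁺‖ :=
    summable_norm_of_abs_le hμ fun i => abs_posPart_le_abs _
  have hN : Summable fun i => ‖(μ i)⁻‖ :=
    summable_norm_of_abs_le hμ fun i => abs_negPart_le_abs _
  have hPN := summable_mul_of_summable_norm hP hN
  exact (hasSum_posPart hμ hμ0).mul (hasSum_negPart hμ hμ0) hPN

lemma hasSum_posPart_mul_negPart_mul_sub (hμ : Summable fun i => |μ i|) (hμ0 : HasSum μ 0)
    {x : α → ℝ} {B : ℝ} (hx : ∀ i, |x i| ≤ B) :
    HasSum (fun p : α × α => (μ p.1)⁺ * (μ p.2)⁻ * (x p.1 - x p.2))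
      (vecNorm μ / 2 * ∑' i, μ i * x i) := by
  have hP : Summable fun i => ‖(μ i)⁺‖ :=
    summable_norm_of_abs_le hμ fun i => abs_posPart_le_abs _
  have hN : Summable fun i => ‖(μ i)⁻‖ :=
    summable_norm_of_abs_le hμ fun i => abs_negPart_le_abs _
  have hPx : Summable fun i => ‖(μ i)⁺ * x i‖ :=
    summable_norm_mul_of_abs_le hμ (fun i => abs_posPart_le_abs _) hx
  have hNx : Summable fun i => ‖(μ i)⁻ * x i‖ :=
    summable_norm_mul_of_abs_le hμ (fun i => abs_negPart_le_abs _) hx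
  have hPxN := summable_mul_of_summable_norm hPx hN
  have hPNx := summable_mul_of_summable_norm hP hNx
  have h1 := hPx.of_norm.hasSum.mul (hasSum_negPart hμ hμ0) hPxN
  have h2 := (hasSum_posPart hμ hμ0).mul hNx.of_norm.hasSum hPNx
  have hμx : ∑' i, μ i * x i = ∑' i, (μ i)⁺ * x i - ∑' i, (μ i)⁻ * x i := by
    rw [← hPx.of_norm.tsum_sub hNx.of_norm]
    simp only [← sub_mul, posPart_sub_negPart]
  rw [hμx, mul_sub, mul_comm]
  have h := h1.sub h2
  rwa [show (fun p : α × α => (μ p.1)⁺ * x p.1 * (μ p.2)⁻ - (μ p.1)⁺ * ((μ p.2)⁻ * x p.2)) =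
    fun p => (μ p.1)⁺ * (μ p.2)⁻ * (x p.1 - x p.2) by funext p; ring] at h

end Coupling

def qErgTerm (Q : E → E → ℝ) (i j : E) : ℝ :=
  |Q i i - Q j i| + |Q i j - Q j j| - ∑' s, if s ≠ i ∧ s ≠ j then |Q i s - Q j s| else 0

def qErgKernel (Q : E → E → ℝ) (i j s : E) : ℝ :=
  if s = i ∨ s = j then |Q i s - Q j s| else -|Q i s - Q j s|

section QErgCoeff

variable {Q : E → E → ℝ} {i j s : E}

lemma qErgCoeff_eq_iInf_qErgTerm (Q : E → E → ℝ) :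
    qErgCoeff Q = 1 / 2 * ⨅ p : {p : E × E // p.1 ≠ p.2}, qErgTerm Q p.1.1 p.1.2 :=
  rfl

lemma two_mul_qErgCoeff_le_qErgTerm (hΛ : 0 < qErgCoeff Q) (hij : i ≠ j) :
    2 * qErgCoeff Q ≤ qErgTerm Q i j := by
  rw [qErgCoeff_eq_iInf_qErgTerm] at hΛ ⊢
  have hbdd : BddBelow (Set.range fun p : {p : E × E // p.1 ≠ p.2} => qErgTerm Q p.1.1 p.1.2) := by
    by_contra h
    rw [Real.iInf_of_not_bddBelow h, mul_zero] at hΛ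
    exact hΛ.false
  linarith [ciInf_le hbdd ⟨(i, j), hij⟩]

lemma abs_qErgKernel : |qErgKernel Q i j s| = |Q i s - Q j s| := by
  unfold qErgKernel
  split_ifs <;> simp

lemma hasSum_qErgKernel (hi : Summable fun s => |Q i s|) (hj : Summable fun s => |Q j s|)
    (hij : i ≠ j) : HasSum (qErgKernel Q i j) (qErgTerm Q i j) := by
  have hoff : Summable fun s => if s ≠ i ∧ s ≠ j then |Q i s - Q j s| else 0 :=
    (hi.of_abs.sub hj.of_abs).abs.of_nonneg_of_le (fun s => by split_ifs <;> simp)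
      fun s => by split_ifs <;> simp
  have h := ((hasSum_ite_eq i |Q i i - Q j i|).add (hasSum_ite_eq j |Q i j - Q j j|)).sub
    hoff.hasSum
  rwa [show (fun s => (if s = i then |Q i i - Q j i| else 0)
      + (if s = j then |Q i j - Q j j| else 0)
      - (if s ≠ i ∧ s ≠ j then |Q i s - Q j s| else 0)) = qErgKernel Q i j by
    funext s
    unfold qErgKernel
    rcases eq_or_ne s i with rfl | hsi
    · simp [hij]
    rcases eq_or_ne s j with rfl | hsj
    · simp [hsi]
    simp [hsi, hsj]] at h

lemma qErgKernel_le_of_ne_left (hQ : IsIntensity Q) (hi : i ≠ s) :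
    qErgKernel Q i j s ≤ Q i s - Q j s := by
  unfold qErgKernel
  split_ifs with h
  · obtain rfl : s = j := h.resolve_left (Ne.symm hi)
    exact (abs_of_nonneg (by linarith [hQ.1 i s hi, hQ.diag_nonpos s])).le
  · exact neg_abs_le _

lemma qErgKernel_le_of_ne_right (hQ : IsIntensity Q) (hj : j ≠ s) :
    qErgKernel Q i j s ≤ Q j s - Q i s := by
  unfold qErgKernel
  split_ifs with h
  · obtain rfl : s = i := h.resolve_right (Ne.symm hj)
    rw [abs_of_nonpos (by linarith [hQ.1 j s hj, hQ.diag_nonpos s]), neg_sub]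
  · linarith [le_abs_self (Q i s - Q j s)]

lemma IsIntensity.summable_abs_qErgKernel (hQ : IsIntensity Q) (i j : E) :
    Summable fun s => |qErgKernel Q i j s| := by
  simpa only [abs_qErgKernel] using hQ.summable_abs_sub hQ i j

lemma IsIntensity.tsum_abs_qErgKernel_le (hQ : IsIntensity Q) {M : ℝ} (hM : ∀ i, -Q i i ≤ M)
    (i j : E) : ∑' s, |qErgKernel Q i j s| ≤ 2 * M + 2 * M := by
  simpa only [abs_qErgKernel] using hQ.tsum_abs_sub_le hQ hM hM i j

lemma IsIntensity.two_mul_qErgCoeff_le_tsum_qErgKernel (hQ : IsIntensity Q)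
    (hΛ : 0 < qErgCoeff Q) (hij : i ≠ j) : 2 * qErgCoeff Q ≤ ∑' s, qErgKernel Q i j s := by
  rw [(hasSum_qErgKernel (hQ.summable_abs_row i) (hQ.summable_abs_row j) hij).tsum_eq]
  exact two_mul_qErgCoeff_le_qErgTerm hΛ hij

end QErgCoeff

section KeyInequality

variable {Q : E → E → ℝ} {μ : E → ℝ}

lemma tsum_posPart_mul_negPart_mul_qErgKernel_le (hQ : IsIntensity Q) {M : ℝ}
    (hM : ∀ i, -Q i i ≤ M) (hμ : Summable fun i => |μ i|) (hμ0 : HasSum μ 0) (s : E) :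
    ∑' p : E × E, (μ p.1)⁺ * (μ p.2)⁻ * qErgKernel Q p.1 p.2 s ≤
      vecNorm μ / 2 * |∑' i, μ i * Q i s| := by
  have hD := hasSum_posPart_mul_negPart_mul_sub hμ hμ0 (x := fun i => Q i s)
    fun i => hQ.abs_le hM i s
  have hK : Summable fun p : E × E => (μ p.1)⁺ * (μ p.2)⁻ * qErgKernel Q p.1 p.2 s :=
    hD.summable.abs.congr (fun p => by simp only [abs_mul, abs_qErgKernel]) |>.of_abs
  have hc : ∀ p : E × E, 0 ≤ (μ p.1)⁺ * (μ p.2)⁻ :=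
    fun p => mul_nonneg (posPart_nonneg _) (negPart_nonneg _)
  have hm : 0 ≤ vecNorm μ / 2 := div_nonneg (tsum_nonneg fun _ => abs_nonneg _) zero_le_two
  rcases le_or_gt 0 (μ s) with hs | hs
  · calc _ ≤ ∑' p : E × E, -((μ p.1)⁺ * (μ p.2)⁻ * (Q p.1 s - Q p.2 s)) := by
          refine hK.tsum_le_tsum (fun p => ?_) hD.summable.neg
          rcases eq_or_ne p.2 s with h | h
          · simp [h, negPart_eq_zero.2 hs]
          · rw [← mul_neg, neg_sub]
            exact mul_le_mul_of_nonneg_left (qErgKernel_le_of_ne_right hQ h) (hc p)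
      _ = -(vecNorm μ / 2 * ∑' i, μ i * Q i s) := by rw [tsum_neg, hD.tsum_eq]
      _ ≤ _ := by rw [← mul_neg]; exact mul_le_mul_of_nonneg_left (neg_le_abs _) hm
  · calc _ ≤ ∑' p : E × E, (μ p.1)⁺ * (μ p.2)⁻ * (Q p.1 s - Q p.2 s) := by
          refine hK.tsum_le_tsum (fun p => ?_) hD.summable
          rcases eq_or_ne p.1 s with h | h
          · simp [h, posPart_eq_zero.2 hs.le]
          · exact mul_le_mul_of_nonneg_left (qErgKernel_le_of_ne_left hQ h) (hc p)
      _ = vecNorm μ / 2 * ∑' i, μ i * Q i s := hD.tsum_eq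
      _ ≤ _ := mul_le_mul_of_nonneg_left (le_abs_self _) hm

theorem qErgCoeff_mul_vecNorm_le (hQ : IsIntensity Q) (hQb : UnifBdd Q)
    (hμ : Summable fun i => |μ i|) (hμ0 : HasSum μ 0) :
    qErgCoeff Q * vecNorm μ ≤ ∑' s, |∑' i, μ i * Q i s| := by
  obtain ⟨M, hM⟩ := hQb
  have hrhs : 0 ≤ ∑' s, |∑' i, μ i * Q i s| := tsum_nonneg fun _ => abs_nonneg _
  have hnorm : 0 ≤ vecNorm μ := tsum_nonneg fun _ => abs_nonneg _
  rcases le_or_gt (qErgCoeff Q) 0 with hΛ | hΛ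
  · exact (mul_nonpos_of_nonpos_of_nonneg hΛ hnorm).trans hrhs
  rcases hnorm.eq_or_lt with h0 | hm
  · rw [← h0, mul_zero]
    exact hrhs
  set c : E × E → ℝ := fun p => (μ p.1)⁺ * (μ p.2)⁻ with hc_def
  have hc : HasSum c (vecNorm μ / 2 * (vecNorm μ / 2)) := hasSum_posPart_mul_negPart hμ hμ0
  have hc0 : ∀ p, 0 ≤ c p := fun p => mul_nonneg (posPart_nonneg _) (negPart_nonneg _)
  have hcK := summable_abs_mul_of_tsum_abs_le (a := c) (K := fun p s => qErgKernel Q p.1 p.2 s)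
    hc.summable.abs (fun p => hQ.summable_abs_qErgKernel p.1 p.2)
    fun p => hQ.tsum_abs_qErgKernel_le hM p.1 p.2
  have hlower : ∀ p, c p * (2 * qErgCoeff Q) ≤ ∑' s, c p * qErgKernel Q p.1 p.2 s := by
    rintro ⟨i, j⟩
    rw [tsum_mul_left]
    rcases eq_or_ne i j with rfl | hij
    · simp [hc_def, posPart_mul_negPart_eq_zero]
    · exact mul_le_mul_of_nonneg_left (hQ.two_mul_qErgCoeff_le_tsum_qErgKernel hΛ hij) (hc0 _)
  refine le_of_mul_le_mul_left ?_ (half_pos hm)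
  calc vecNorm μ / 2 * (qErgCoeff Q * vecNorm μ)
      = ∑' p, c p * (2 * qErgCoeff Q) := by rw [tsum_mul_right, hc.tsum_eq]; ring
    _ ≤ ∑' p, ∑' s, c p * qErgKernel Q p.1 p.2 s :=
        (hc.summable.mul_right _).tsum_le_tsum hlower hcK.of_abs.prod
    _ = ∑' s, ∑' p, c p * qErgKernel Q p.1 p.2 s := hcK.of_abs.tsum_comm.symm
    _ ≤ ∑' s, vecNorm μ / 2 * |∑' i, μ i * Q i s| :=
        hcK.of_abs.prod_symm.prod.tsum_le_tsum
          (tsum_posPart_mul_negPart_mul_qErgKernel_le hQ hM hμ hμ0)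
          ((summable_abs_tsum_mul hμ hQ.summable_abs_row (hQ.tsum_abs_row_le hM)).mul_left _)
    _ = vecNorm μ / 2 * ∑' s, |∑' i, μ i * Q i s| := tsum_mul_left

end KeyInequality

theorem stmt13_general {E : Type*} (Q Qt : E → E → ℝ) (pi nu : E → ℝ)
    (hQ : IsIntensity Q) (hQt : IsIntensity Qt)
    (hQb : UnifBdd Q) (hQtb : UnifBdd Qt)
    (hpi : IsProbVec pi) (hnu : IsProbVec nu)
    (hpiinv : QInvariant pi Q) (hnuinv : QInvariant nu Qt)
    (hpos : 0 < qErgCoeff Q) :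
    vecNorm (fun i => nu i - pi i) ≤
      rowSumNorm (fun i j => Qt i j - Q i j) / qErgCoeff Q := by
  obtain ⟨M, hM⟩ := hQb
  obtain ⟨Mt, hMt⟩ := hQtb
  have hnu_abs : Summable fun i => |nu i| := hnu.hasSum.summable.abs
  have hμ : Summable fun i => |nu i - pi i| := (hnu.hasSum.summable.sub hpi.hasSum.summable).abs
  have hμ0 : HasSum (fun i => nu i - pi i) 0 := by simpa using hnu.hasSum.sub hpi.hasSum
  have hrow_le : ∀ i, ∑' j, |Qt i j - Q i j| ≤ rowSumNorm fun i j => Qt i j - Q i j :=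
    tsum_abs_le_rowSumNorm fun i => hQt.tsum_abs_sub_le hQ hMt hM i i
  rw [le_div_iff₀ hpos, mul_comm]
  calc qErgCoeff Q * vecNorm (fun i => nu i - pi i)
      ≤ ∑' s, |∑' i, (nu i - pi i) * Q i s| := qErgCoeff_mul_vecNorm_le hQ ⟨M, hM⟩ hμ hμ0
    _ = ∑' s, |∑' i, nu i * (Qt i s - Q i s)| := tsum_congr fun s => by
        rw [tsum_mul_sub_eq_neg_of_invariant hpiinv hnuinv
          (summable_mul_apply hnu_abs hQ.summable_abs_row (hQ.tsum_abs_row_le hM) s), abs_neg]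
    _ ≤ rowSumNorm (fun i j => Qt i j - Q i j) * ∑' i, |nu i| :=
        tsum_abs_tsum_mul_le hnu_abs (fun i => hQt.summable_abs_sub hQ i i) hrow_le
    _ = rowSumNorm fun i j => Qt i j - Q i j := by
        rw [tsum_congr fun i => abs_of_nonneg (hnu.1 i), hnu.2, mul_one]

/-- if Λ₁(Q) > 0 then ‖ν − π‖ ≤ ‖Q̃ − Q‖/Λ₁(Q). -/
theorem stmt13 {E : Type*} [Countable E] (Q Qt : E → E → ℝ) (pi nu : E → ℝ)
    (hQ : IsIntensity Q) (hQt : IsIntensity Qt)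
    (hQb : UnifBdd Q) (hQtb : UnifBdd Qt)
    (hQirr : QIrred Q) (hQtirr : QIrred Qt)
    (hpi : IsProbVec pi) (hnu : IsProbVec nu)
    (hpiinv : QInvariant pi Q) (hnuinv : QInvariant nu Qt)
    (hpos : 0 < qErgCoeff Q) :
    vecNorm (fun i => nu i - pi i) ≤
      rowSumNorm (fun i j => Qt i j - Q i j) / qErgCoeff Q :=
  stmt13_general Q Qt pi nu hQ hQt hQb hQtb hpi hnu hpiinv hnuinv hpos

end
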